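/- arXiv:1711.07585 — 2 statements merged into one kernel-verified Lean document; each statement's English description precedes it below -/
import Mathlib

section
/- Let d ≥ 2 and suppose there are m orthonormal bases B_0,...,B_{m-1} of ℂ^d that together distinguish all pure states, i.e., the map sending each pure state ρ to the family of probabilities (⟨φ_j^k, ρ φ_j^k⟩)_{j=0,...,m-1; k=0,...,d-1} over all basis vectors φ_j^k ∈ B_j is injective on pure states. Then there exists a POVM on ℂ^d with exactly m(d−1)+1 elements, each of rank at most one, such that the map sending each pure state ρ to its outcome probability vector under this POVM is injective on pure states (i.e., a rank-1 PSIR-complete POVM with m(d−1)+1 elements exists). -/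
open Matrix BigOperators ComplexOrder

/-- The pure state (rank-one projection) `|φ⟩⟨φ|` associated to a vector `φ`. -/
noncomputable def pureState {d : ℕ} (φ : Fin d → ℂ) : Matrix (Fin d) (Fin d) ℂ :=
  Matrix.vecMulVec φ (star φ)

/-- `φ` is a unit vector. -/
def IsUnitVec {d : ℕ} (φ : Fin d → ℂ) : Prop := star φ ⬝ᵥ φ = 1

/-
Since each orthonormal basis resolves the identity, the projection onto one vector of a basis
is the identity minus the projections onto the others. Hence dropping one vector from every
basis and adding back one dropped vector leaves m(d-1)+1 vectors `vᵢ` whose projections span all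
the original ones and the identity; they still distinguish pure states. Their frame operator
`T = ∑ |vᵢ⟩⟨vᵢ|` is positive definite, and with `A = T^{-1/2}` the operators
`Fᵢ = |A vᵢ⟩⟨A vᵢ|` form a rank-one POVM. Its statistics on `ψ` are those of the `vᵢ` on the
unnormalized vector `A ψ`; the identity in the span fixes the norm of `A ψ`, so a common rescaling
reduces to unit vectors, and the invertibility of `A` recovers `ψ`.
-/

section

variable {d : ℕ} {ι κ : Type*}

lemma pureState_posSemidef (v : Fin d → ℂ) : (pureState v).PosSemidef :=
  posSemidef_vecMulVec_self_star v

lemma rank_pureState_le_one (v : Fin d → ℂ) : (pureState v).rank ≤ 1 :=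
  rank_vecMulVec_le v (star v)

lemma pureState_mulVec (A : Matrix (Fin d) (Fin d) ℂ) (v : Fin d → ℂ) :
    pureState (A *ᵥ v) = A * pureState v * Aᴴ := by
  rw [pureState, pureState, mul_vecMulVec, vecMulVec_mul, star_mulVec]

lemma pureState_smul (c : ℂ) (v : Fin d → ℂ) :
    pureState (c • v) = (star c * c) • pureState v := by
  rw [pureState, pureState, star_smul, smul_vecMulVec, vecMulVec_smul, smul_smul, mul_comm]

lemma trace_mul_pureState (M : Matrix (Fin d) (Fin d) ℂ) (v : Fin d → ℂ) :
    (M * pureState v).trace = star v ⬝ᵥ (M *ᵥ v) := by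
  rw [pureState, mul_vecMulVec, trace_vecMulVec, dotProduct_comm]

lemma trace_pureState (v : Fin d → ℂ) : (pureState v).trace = star v ⬝ᵥ v := by
  simpa using trace_mul_pureState 1 v

lemma trace_pureState_mul_pureState_mulVec (A : Matrix (Fin d) (Fin d) ℂ) (u v : Fin d → ℂ) :
    (pureState u * pureState (A *ᵥ v)).trace = (pureState (Aᴴ *ᵥ u) * pureState v).trace := by
  rw [pureState_mulVec, pureState_mulVec, conjTranspose_conjTranspose]
  simp only [Matrix.mul_assoc]
  rw [trace_mul_comm Aᴴ]
  simp only [Matrix.mul_assoc]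

lemma sum_pureState_eq_one_of_orthonormal {w : Fin d → Fin d → ℂ}
    (hw : ∀ k l, star (w k) ⬝ᵥ w l = if k = l then 1 else 0) :
    ∑ k, pureState (w k) = 1 := by
  let U : Matrix (Fin d) (Fin d) ℂ := Matrix.of fun i k => w k i
  have hU : Uᴴ * U = 1 := by
    ext k l
    simpa [U, Matrix.mul_apply, Matrix.one_apply, dotProduct] using hw k l
  calc ∑ k, pureState (w k) = U * Uᴴ := by
        ext i l
        simp [U, Matrix.sum_apply, pureState, Matrix.mul_apply, vecMulVec_apply]
    _ = 1 := mul_eq_one_comm.mp hU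

lemma isUnitVec_smul_iff (c : ℂ) (v : Fin d → ℂ) :
    IsUnitVec (c • v) ↔ star c * c * (star v ⬝ᵥ v) = 1 := by
  rw [IsUnitVec, star_smul, smul_dotProduct, dotProduct_smul, smul_smul, smul_eq_mul]

lemma exists_star_mul_self_mul_eq_one {t : ℂ} (ht : 0 < t) : ∃ c : ℂ, star c * c * t = 1 := by
  obtain ⟨r, rfl⟩ : ∃ r : ℝ, (r : ℂ) = t :=
    ⟨t.re, Complex.ext rfl (Complex.pos_iff.1 ht).2⟩
  have hr : 0 < r := Complex.zero_lt_real.1 ht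
  refine ⟨((Real.sqrt r)⁻¹ : ℝ), ?_⟩
  rw [Complex.star_def, Complex.conj_ofReal, ← Complex.ofReal_mul, ← Complex.ofReal_mul,
    Complex.ofReal_eq_one, ← mul_inv, Real.mul_self_sqrt hr.le, inv_mul_cancel₀ hr.ne']

def DistinguishesPureStates (E : ι → Matrix (Fin d) (Fin d) ℂ) : Prop :=
  ∀ ψ₁ ψ₂ : Fin d → ℂ, IsUnitVec ψ₁ → IsUnitVec ψ₂ →
    (∀ i, (pureState ψ₁ * E i).trace = (pureState ψ₂ * E i).trace) →
    pureState ψ₁ = pureState ψ₂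

lemma trace_mul_eq_of_mem_span {n R : Type*} [Fintype n] [CommRing R] {E : ι → Matrix n n R}
    {σ₁ σ₂ X : Matrix n n R} (h : ∀ i, (σ₁ * E i).trace = (σ₂ * E i).trace)
    (hX : X ∈ Submodule.span R (Set.range E)) :
    (σ₁ * X).trace = (σ₂ * X).trace :=
  let f (σ : Matrix n n R) := traceLinearMap n R R ∘ₗ LinearMap.mulLeft R σ
  LinearMap.eqOn_span (f := f σ₁) (g := f σ₂) (Set.forall_mem_range.2 h) hX

namespace DistinguishesPureStates

variable {E : ι → Matrix (Fin d) (Fin d) ℂ}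

lemma of_forall_mem_span {E' : κ → Matrix (Fin d) (Fin d) ℂ} (hE : DistinguishesPureStates E)
    (hspan : ∀ i, E i ∈ Submodule.span ℂ (Set.range E')) : DistinguishesPureStates E' :=
  fun ψ₁ ψ₂ h₁ h₂ h ↦ hE ψ₁ ψ₂ h₁ h₂ fun i ↦ trace_mul_eq_of_mem_span h (hspan i)

lemma pureState_eq (hE : DistinguishesPureStates E)
    (h1 : 1 ∈ Submodule.span ℂ (Set.range E)) {w₁ w₂ : Fin d → ℂ} (hw₁ : w₁ ≠ 0)
    (h : ∀ i, (pureState w₁ * E i).trace = (pureState w₂ * E i).trace) :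
    pureState w₁ = pureState w₂ := by
  have hnorm : star w₁ ⬝ᵥ w₁ = star w₂ ⬝ᵥ w₂ := by
    simpa [trace_pureState] using trace_mul_eq_of_mem_span h h1
  obtain ⟨c, hc⟩ := exists_star_mul_self_mul_eq_one (dotProduct_star_self_pos_iff.2 hw₁)
  apply smul_right_injective _ (left_ne_zero_of_mul_eq_one hc)
  simp only [← pureState_smul]
  refine hE _ _ ((isUnitVec_smul_iff _ _).2 hc) ((isUnitVec_smul_iff _ _).2 (hnorm ▸ hc))
    fun i ↦ ?_
  rw [pureState_smul, pureState_smul, smul_mul_assoc, smul_mul_assoc, trace_smul, trace_smul, h i]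

end DistinguishesPureStates

lemma posDef_sum_pureState [Fintype ι] {v : ι → Fin d → ℂ}
    (h1 : 1 ∈ Submodule.span ℂ (Set.range fun i ↦ pureState (v i))) :
    (∑ i, pureState (v i)).PosDef := by
  have hT := posSemidef_sum Finset.univ fun i _ ↦ pureState_posSemidef (v i)
  refine PosDef.of_dotProduct_mulVec_pos hT.isHermitian fun x hx ↦
    (hT.dotProduct_mulVec_nonneg x).lt_of_ne fun h0 ↦ hx ?_
  have hsum : star x ⬝ᵥ ((∑ i, pureState (v i)) *ᵥ x)
      = ∑ i, (pureState x * pureState (v i)).trace := by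
    simp only [← trace_mul_pureState, Finset.sum_mul, trace_sum, trace_mul_comm (pureState x)]
  have hzero : ∀ i, (pureState x * pureState (v i)).trace = (0 * pureState (v i)).trace := by
    intro i
    rw [zero_mul, trace_zero]
    refine (Finset.sum_eq_zero_iff_of_nonneg fun i _ ↦ ?_).1 (h0 ▸ hsum).symm i
      (Finset.mem_univ i)
    rw [trace_mul_pureState]
    exact (pureState_posSemidef x).dotProduct_mulVec_nonneg _
  simpa [trace_pureState] using trace_mul_eq_of_mem_span hzero h1

open scoped MatrixOrder in
lemma Matrix.PosDef.exists_isUnit_mul_mul_conjTranspose_eq_one {n 𝕜 : Type*} [Fintype n]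
    [DecidableEq n] [RCLike 𝕜] {T : Matrix n n 𝕜} (hT : T.PosDef) :
    ∃ A : Matrix n n 𝕜, IsUnit A ∧ A * T * Aᴴ = 1 := by
  set C := CFC.sqrt T
  have hCC : C * C = T := CFC.sqrt_mul_sqrt_self T hT.posSemidef.nonneg
  have hCH : Cᴴ = C := (CFC.sqrt_nonneg T).posSemidef.isHermitian
  have hC : IsUnit C := (CFC.isUnit_sqrt_iff T hT.posSemidef.nonneg).2 hT.isUnit
  have hdet : IsUnit C.det := (isUnit_iff_isUnit_det C).1 hC
  refine ⟨C⁻¹, (isUnit_nonsing_inv_iff).2 hC, ?_⟩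
  rw [← hCC, conjTranspose_nonsing_inv, hCH, ← Matrix.mul_assoc, nonsing_inv_mul _ hdet,
    Matrix.one_mul, mul_nonsing_inv _ hdet]

lemma DistinguishesPureStates.exists_rankOne_povm [Fintype ι] {v : ι → Fin d → ℂ}
    (hv : DistinguishesPureStates fun i ↦ pureState (v i))
    (h1 : 1 ∈ Submodule.span ℂ (Set.range fun i ↦ pureState (v i))) :
    ∃ F : ι → Matrix (Fin d) (Fin d) ℂ, (∀ i, (F i).PosSemidef) ∧ (∀ i, (F i).rank ≤ 1) ∧
      ∑ i, F i = 1 ∧ DistinguishesPureStates F := by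
  obtain ⟨A, hA, hAT⟩ := (posDef_sum_pureState h1).exists_isUnit_mul_mul_conjTranspose_eq_one
  refine ⟨fun i ↦ pureState (A *ᵥ v i), fun i ↦ pureState_posSemidef _,
    fun i ↦ rank_pureState_le_one _, ?_, fun ψ₁ ψ₂ h₁ h₂ h ↦ ?_⟩
  · simp_rw [pureState_mulVec, ← Finset.sum_mul, ← Finset.mul_sum, hAT]
  have hAH : IsUnit Aᴴ := by simpa using hA.star
  have hψ₁ : ψ₁ ≠ 0 := by
    rintro rfl
    simp [IsUnitVec] at h₁
  have hσ := hv.pureState_eq h1 ((mulVec_injective_of_isUnit hAH).ne_iff' (mulVec_zero _) |>.2 hψ₁)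
    fun i ↦ by simpa only [trace_pureState_mul_pureState_mulVec] using h i
  rw [pureState_mulVec, pureState_mulVec, conjTranspose_conjTranspose] at hσ
  exact hAH.mul_left_cancel (hA.mul_right_cancel hσ)

lemma not_distinguishesPureStates_of_isEmpty [IsEmpty ι] (hd : 2 ≤ d)
    (E : ι → Matrix (Fin d) (Fin d) ℂ) : ¬ DistinguishesPureStates E := by
  intro hE
  have hunit (i : Fin d) : IsUnitVec (Pi.single i 1) := by simp [IsUnitVec]
  have := congrFun₂ (hE _ _ (hunit ⟨0, by omega⟩) (hunit ⟨1, by omega⟩) isEmptyElim)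
    ⟨0, by omega⟩ ⟨0, by omega⟩
  simp [pureState, vecMulVec_apply, Fin.ext_iff] at this

section TrimmedBases

variable {m d' : ℕ}

def trimmedBases (φ : Fin m → Fin (d' + 1) → Fin (d' + 1) → ℂ) (j₀ : Fin m) :
    Option (Fin m × Fin d') → Fin (d' + 1) → ℂ
  | none => φ j₀ 0
  | some jk => φ jk.1 jk.2.succ

variable {φ : Fin m → Fin (d' + 1) → Fin (d' + 1) → ℂ}

lemma one_mem_span_trimmedBases (hφ : ∀ j, ∑ k, pureState (φ j k) = 1) (j₀ : Fin m) :
    1 ∈ Submodule.span ℂ (Set.range fun o ↦ pureState (trimmedBases φ j₀ o)) := by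
  rw [← hφ j₀, Fin.sum_univ_succ]
  exact add_mem (Submodule.subset_span ⟨none, rfl⟩)
    (Submodule.sum_mem _ fun k _ ↦ Submodule.subset_span ⟨some (j₀, k), rfl⟩)

lemma pureState_mem_span_trimmedBases (hφ : ∀ j, ∑ k, pureState (φ j k) = 1) (j₀ : Fin m)
    (j : Fin m) (k : Fin (d' + 1)) :
    pureState (φ j k) ∈ Submodule.span ℂ (Set.range fun o ↦ pureState (trimmedBases φ j₀ o)) := by
  cases k using Fin.cases with
  | zero =>
    rw [← add_sub_cancel_right (pureState (φ j 0)) (∑ k : Fin d', pureState (φ j k.succ)),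
      ← Fin.sum_univ_succ (f := fun k ↦ pureState (φ j k)), hφ j]
    exact sub_mem (one_mem_span_trimmedBases hφ j₀)
      (Submodule.sum_mem _ fun k _ ↦ Submodule.subset_span ⟨some (j, k), rfl⟩)
  | succ k => exact Submodule.subset_span ⟨some (j, k), rfl⟩

end TrimmedBases

end

theorem stmt_2 {d m : ℕ} (hd : 2 ≤ d) (φ : Fin m → Fin d → Fin d → ℂ)
    (horth : ∀ j k l, star (φ j k) ⬝ᵥ φ j l = if k = l then 1 else 0)
    (hdist : ∀ ψ₁ ψ₂ : Fin d → ℂ, IsUnitVec ψ₁ → IsUnitVec ψ₂ →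
      (∀ j k, star (φ j k) ⬝ᵥ (pureState ψ₁).mulVec (φ j k) =
              star (φ j k) ⬝ᵥ (pureState ψ₂).mulVec (φ j k)) →
      pureState ψ₁ = pureState ψ₂) :
    ∃ F : Fin (m * (d - 1) + 1) → Matrix (Fin d) (Fin d) ℂ,
      (∀ k, (F k).PosSemidef) ∧ (∀ k, (F k).rank ≤ 1) ∧ (∑ k, F k = 1) ∧
      (∀ ψ₁ ψ₂ : Fin d → ℂ, IsUnitVec ψ₁ → IsUnitVec ψ₂ →
        (∀ k, (pureState ψ₁ * F k).trace = (pureState ψ₂ * F k).trace) →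
        pureState ψ₁ = pureState ψ₂) := by
  have hE : DistinguishesPureStates fun jk : Fin m × Fin d ↦ pureState (φ jk.1 jk.2) :=
    fun ψ₁ ψ₂ h₁ h₂ h ↦ hdist ψ₁ ψ₂ h₁ h₂ fun j k ↦ by
      simpa only [trace_mul_pureState] using h (j, k)
  obtain ⟨j₀⟩ : Nonempty (Fin m) := by
    by_contra hm
    have := not_nonempty_iff.1 hm
    exact not_distinguishesPureStates_of_isEmpty hd _ hE
  obtain ⟨d', rfl⟩ : ∃ d', d = d' + 1 := ⟨d - 1, by omega⟩
  have hφ j : ∑ k, pureState (φ j k) = 1 := sum_pureState_eq_one_of_orthonormal (horth j)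
  obtain ⟨F, hpos, hrank, hsum, hF⟩ :=
    (hE.of_forall_mem_span fun jk ↦ pureState_mem_span_trimmedBases hφ j₀ jk.1 jk.2
      ).exists_rankOne_povm (one_mem_span_trimmedBases hφ j₀)
  let e : Fin (m * d' + 1) ≃ Option (Fin m × Fin d') :=
    (finSuccEquiv _).trans (Equiv.optionCongr finProdFinEquiv.symm)
  exact ⟨F ∘ e, fun k ↦ hpos _, fun k ↦ hrank _, (e.sum_comp F).trans hsum,
    fun ψ₁ ψ₂ h₁ h₂ h ↦ hF ψ₁ ψ₂ h₁ h₂ (e.surjective.forall.2 h)⟩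
end

section
/- On ℂ², define the four rank-one positive operators E₁ = |0⟩⟨0|, E₂ = |1⟩⟨1|, E₃ = (1/2)(|0⟩+|1⟩)(⟨0|+⟨1|), E₄ = (1/2)(|0⟩+i|1⟩)(⟨0|−i⟨1|), let G = E₁+E₂+E₃+E₄, and set F_k = G^{-1/2} E_k G^{-1/2}. Then {F₁, F₂, F₃, F₄} is a POVM whose elements each have rank at most one, and the map sending each density matrix ρ on ℂ² to (tr(ρF₁), tr(ρF₂), tr(ρF₃), tr(ρF₄)) is injective on the set of all density matrices; that is, it is a four-element rank-1 informationally complete POVM on ℂ². -/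
/-! `G = E₁ + E₂ + E₃ + E₄ = 1 + E₃ + E₄` is positive definite, so its square root `S` is
invertible and the `Fₖ = S⁻¹ Eₖ S⁻¹` are positive, of rank at most one, and sum to
`S⁻¹ G S⁻¹ = 1`. Since `tr (ρ Fₖ) = tr ((S⁻¹ ρ S⁻¹) Eₖ)` and `ρ ↦ S⁻¹ ρ S⁻¹` is injective,
informational completeness reduces to the `Eₖ` separating all `2 × 2` matrices under the trace
pairing: the pairings give `M₀₀`, `M₁₁`, and then `M₀₁`, `M₁₀` by combining the last two. -/

open Matrix BigOperators ComplexOrder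

/-- `ρ` is a density matrix: positive semidefinite with trace one. -/
def IsDensityMatrix {d : ℕ} (ρ : Matrix (Fin d) (Fin d) ℂ) : Prop :=
  ρ.PosSemidef ∧ ρ.trace = 1

/-- `E₁ = |0⟩⟨0|`, `E₂ = |1⟩⟨1|`, `E₃ = (1/2)(|0⟩+|1⟩)(⟨0|+⟨1|)`,
`E₄ = (1/2)(|0⟩+i|1⟩)(⟨0|−i⟨1|)`. -/
noncomputable def E4 : Fin 4 → Matrix (Fin 2) (Fin 2) ℂ
  | 0 => pureState ![1, 0]
  | 1 => pureState ![0, 1]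
  | 2 => (1/2 : ℂ) • pureState ![1, 1]
  | 3 => (1/2 : ℂ) • pureState ![1, Complex.I]

/-- The square root of a positive semidefinite matrix, as defined in the older Mathlib
(`Matrix.PosSemidef.sqrt`, removed since). -/
noncomputable def Matrix.PosSemidef.sqrt {n 𝕜 : Type*} [Fintype n] [DecidableEq n] [RCLike 𝕜]
    {A : Matrix n n 𝕜} (hA : A.PosSemidef) : Matrix n n 𝕜 :=
  hA.1.eigenvectorUnitary.1 * diagonal ((↑) ∘ (√·) ∘ hA.1.eigenvalues) *
    (star hA.1.eigenvectorUnitary : Matrix n n 𝕜)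

namespace Matrix.PosSemidef

variable {n 𝕜 : Type*} [Fintype n] [DecidableEq n] [RCLike 𝕜] {A : Matrix n n 𝕜}

lemma sqrt_eq_conjStarAlgAut (hA : A.PosSemidef) :
    hA.sqrt = Unitary.conjStarAlgAut 𝕜 _ hA.1.eigenvectorUnitary
      (diagonal ((↑) ∘ (√·) ∘ hA.1.eigenvalues)) := rfl

lemma posSemidef_sqrt (hA : A.PosSemidef) : hA.sqrt.PosSemidef := by
  refine (posSemidef_diagonal_iff.mpr fun i => ?_).mul_mul_conjTranspose_same
    (hA.1.eigenvectorUnitary : Matrix n n 𝕜)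
  exact RCLike.ofReal_nonneg.mpr (Real.sqrt_nonneg _)

lemma sqrt_mul_sqrt (hA : A.PosSemidef) : hA.sqrt * hA.sqrt = A := by
  conv_rhs => rw [hA.1.spectral_theorem]
  rw [sqrt_eq_conjStarAlgAut, ← map_mul, diagonal_mul_diagonal]
  congr 2 with i
  simp [← RCLike.ofReal_mul, Real.mul_self_sqrt (hA.eigenvalues_nonneg i)]

lemma isUnit_det_sqrt (hA : A.PosSemidef) (h : IsUnit A.det) : IsUnit hA.sqrt.det := by
  rw [← hA.sqrt_mul_sqrt, det_mul, IsUnit.mul_iff] at h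
  exact h.1

lemma sqrt_inv_mul_self_mul_sqrt_inv (hA : A.PosSemidef) (h : IsUnit A.det) :
    hA.sqrt⁻¹ * A * hA.sqrt⁻¹ = 1 := by
  have hSS := hA.sqrt_mul_sqrt
  have hS := hA.isUnit_det_sqrt h
  generalize hA.sqrt = S at hSS hS ⊢
  subst hSS
  rw [← Matrix.mul_assoc, nonsing_inv_mul _ hS, Matrix.one_mul, mul_nonsing_inv _ hS]

lemma posSemidef_sqrt_inv_mul_mul_sqrt_inv (hA : A.PosSemidef) {B : Matrix n n 𝕜}
    (hB : B.PosSemidef) : (hA.sqrt⁻¹ * B * hA.sqrt⁻¹).PosSemidef := by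
  simpa only [hA.posSemidef_sqrt.isHermitian.inv.eq] using hB.conjTranspose_mul_mul_same hA.sqrt⁻¹

lemma sum_sqrt_inv_mul_mul_sqrt_inv {ι : Type*} [Fintype ι] {E : ι → Matrix n n 𝕜}
    (hG : (∑ k, E k).PosSemidef) (h : IsUnit (∑ k, E k).det) :
    ∑ k, hG.sqrt⁻¹ * E k * hG.sqrt⁻¹ = 1 := by
  rw [← Finset.sum_mul, ← Finset.mul_sum, hG.sqrt_inv_mul_self_mul_sqrt_inv h]

end Matrix.PosSemidef

lemma Matrix.injective_trace_mul_conj {n ι R : Type*} [Fintype n] [DecidableEq n] [CommRing R]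
    {E : ι → Matrix n n R} (hE : Function.Injective fun M => fun k => (M * E k).trace)
    {T : Matrix n n R} (hT : IsUnit T.det) :
    Function.Injective fun M => fun k => (M * (T * E k * T)).trace := by
  intro M N h
  have hconj : T * M * T = T * N * T := hE <| funext fun k => by
    simpa only [← Matrix.mul_assoc, trace_mul_cycle _ _ T] using congrFun h k
  have cancel (X : Matrix n n R) : T⁻¹ * (T * X * T) * T⁻¹ = X := by
    rw [← Matrix.mul_assoc, ← Matrix.mul_assoc, nonsing_inv_mul _ hT, Matrix.one_mul,
      mul_nonsing_inv_cancel_right _ _ hT]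
  rw [← cancel M, hconj, cancel]

lemma E4_posSemidef (k : Fin 4) : (E4 k).PosSemidef := by
  have half : (0 : ℂ) ≤ 1 / 2 := by positivity
  fin_cases k
  · exact posSemidef_vecMulVec_self_star _
  · exact posSemidef_vecMulVec_self_star _
  · exact (posSemidef_vecMulVec_self_star ![1, 1]).smul half
  · exact (posSemidef_vecMulVec_self_star ![1, Complex.I]).smul half

lemma rank_E4_le (k : Fin 4) : (E4 k).rank ≤ 1 := by
  fin_cases k <;> simp only [E4, pureState, ← smul_vecMulVec] <;> exact rank_vecMulVec_le _ _

lemma posDef_sum_E4 : (∑ k, E4 k).PosDef := by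
  have h01 : E4 0 + E4 1 = 1 := by
    ext i j
    fin_cases i <;> fin_cases j <;> simp [E4, pureState, vecMulVec_apply, -cons_vecMulVec]
  rw [Fin.sum_univ_four, h01, add_assoc]
  exact PosDef.one.add_posSemidef ((E4_posSemidef 2).add (E4_posSemidef 3))

lemma trace_mul_E4 (M : Matrix (Fin 2) (Fin 2) ℂ) :
    (fun k => (M * E4 k).trace) = ![M 0 0, M 1 1, (M 0 0 + M 0 1 + M 1 0 + M 1 1) / 2,
      (M 0 0 + Complex.I * M 0 1 - Complex.I * M 1 0 + M 1 1) / 2] := by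
  funext k
  fin_cases k <;>
    simp [E4, pureState, trace_fin_two, mul_apply, vecMulVec_apply, -cons_vecMulVec] <;> ring

lemma injective_trace_mul_E4 :
    Function.Injective fun M : Matrix (Fin 2) (Fin 2) ℂ => fun k => (M * E4 k).trace := by
  intro M N h
  simp only [trace_mul_E4, vecCons_inj] at h
  obtain ⟨h0, h1, h2, h3, -⟩ := h
  -- with `tₖ = tr (M Eₖ)`: `t₂ - i t₃ = M₀₁ + (1 - i)(M₀₀ + M₁₁)/2`,
  -- `t₂ + i t₃ = M₁₀ + (1 + i)(M₀₀ + M₁₁)/2`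
  have h01 : M 0 1 = N 0 1 := by
    linear_combination h2 - Complex.I * h3 - ((1 - Complex.I) * (h0 + h1)
      - (M 0 1 - M 1 0 - N 0 1 + N 1 0) * Complex.I_sq) / 2
  have h10 : M 1 0 = N 1 0 := by
    linear_combination h2 + Complex.I * h3 - ((1 + Complex.I) * (h0 + h1)
      - (M 1 0 - M 0 1 - N 1 0 + N 0 1) * Complex.I_sq) / 2
  rw [eta_fin_two M, eta_fin_two N, h0, h01, h10, h1]

theorem stmt_12 :
    (∑ k, E4 k).PosDef ∧
    ∀ hG : (∑ k, E4 k).PosSemidef,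
      (∀ k, (hG.sqrt⁻¹ * E4 k * hG.sqrt⁻¹).PosSemidef) ∧
      (∀ k, (hG.sqrt⁻¹ * E4 k * hG.sqrt⁻¹).rank ≤ 1) ∧
      (∑ k, hG.sqrt⁻¹ * E4 k * hG.sqrt⁻¹ = 1) ∧
      (∀ ρ₁ ρ₂ : Matrix (Fin 2) (Fin 2) ℂ, IsDensityMatrix ρ₁ → IsDensityMatrix ρ₂ →
        (∀ k, (ρ₁ * (hG.sqrt⁻¹ * E4 k * hG.sqrt⁻¹)).trace =
              (ρ₂ * (hG.sqrt⁻¹ * E4 k * hG.sqrt⁻¹)).trace) → ρ₁ = ρ₂) := by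
  refine ⟨posDef_sum_E4, fun hG => ?_⟩
  have hG_det : IsUnit (∑ k, E4 k).det := posDef_sum_E4.det_pos.ne'.isUnit
  have hS_inv_det : IsUnit hG.sqrt⁻¹.det :=
    isUnit_nonsing_inv_det _ (hG.isUnit_det_sqrt hG_det)
  refine ⟨fun k => hG.posSemidef_sqrt_inv_mul_mul_sqrt_inv (E4_posSemidef k),
    fun k => ?_, hG.sum_sqrt_inv_mul_mul_sqrt_inv hG_det, fun ρ₁ ρ₂ _ _ h => ?_⟩
  · exact (rank_mul_le_left _ _).trans ((rank_mul_le_right _ _).trans (rank_E4_le k))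
  · exact injective_trace_mul_conj injective_trace_mul_E4 hS_inv_det (funext h)
end
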